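/- The form α' = (2r²−1)dz + r²(r²−1)dθ is a positive contact form on ℝ³: for every point p = (u,v,z) ∈ ℝ³, writing r² = u²+v², the evaluation of α'∧dα' on the standard basis, namely α'(p)(e₁)·dα'(p)(e₂,e₃) − α'(p)(e₂)·dα'(p)(e₁,e₃) + α'(p)(e₃)·dα'(p)(e₁,e₂), equals 2(2r⁴ − 2r² + 1), and this quantity satisfies 2(2r⁴−2r²+1) ≥ 1 > 0 for all r. -/
import Mathlib


noncomputable section

/-- Points of `ℝ³` with coordinates `(u, v, z)`. -/
abbrev Pt3 : Type := EuclideanSpace ℝ (Fin 3)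

/-- The `u`-coordinate. -/
def uu (p : Pt3) : ℝ := p 0
/-- The `v`-coordinate. -/
def vv (p : Pt3) : ℝ := p 1
/-- The `z`-coordinate. -/
def zz (p : Pt3) : ℝ := p 2
/-- `r² = u² + v²`. -/
def r2 (p : Pt3) : ℝ := uu p ^ 2 + vv p ^ 2

/-- The 1-form `α' = (2r²−1)dz + r²(r²−1)dθ` evaluated at `p` on `w`. -/
def αval (p w : Pt3) : ℝ :=
  (2 * r2 p - 1) * zz w + (r2 p - 1) * (uu p * vv w - vv p * uu w)

/-- The 2-form `dα' = 4r dr∧dz + 2r(2r²−1)dr∧dθ` evaluated at `p` on `(a, b)`. -/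
def dαval (p a b : Pt3) : ℝ :=
  4 * (uu p * uu a + vv p * vv a) * zz b - 4 * (uu p * uu b + vv p * vv b) * zz a
    + 2 * (2 * r2 p - 1) * (uu a * vv b - vv a * uu b)

/-- The standard basis vectors of `ℝ³`. -/
def e (j : Fin 3) : Pt3 := EuclideanSpace.single j 1

/-- `α'` is a positive contact form on `ℝ³`: the evaluation of `α'∧dα'` on the
standard basis equals `2(2r⁴ − 2r² + 1)`, and `2(2r⁴−2r²+1) ≥ 1 > 0` for all `r`. -/
theorem stmt5 :
    (∀ p : Pt3,
      αval p (e 0) * dαval p (e 1) (e 2) - αval p (e 1) * dαval p (e 0) (e 2)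
        + αval p (e 2) * dαval p (e 0) (e 1)
        = 2 * (2 * r2 p ^ 2 - 2 * r2 p + 1)) ∧
    (∀ r : ℝ, 1 ≤ 2 * (2 * r ^ 4 - 2 * r ^ 2 + 1) ∧ 0 < 2 * (2 * r ^ 4 - 2 * r ^ 2 + 1)) := by
  constructor
  · intro p
    simp only [αval, dαval, uu, vv, zz, r2, e, EuclideanSpace.single_apply]
    norm_num [Fin.ext_iff]
    ring
  · intro r
    have h : 1 ≤ 2 * (2 * r ^ 4 - 2 * r ^ 2 + 1) := by nlinarith [sq_nonneg (2*r^2-1)]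
    exact ⟨h, lt_of_lt_of_le one_pos h⟩
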